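/- arXiv:2601.13271 — 2 statements merged into one kernel-verified Lean document; each statement's English description precedes it below -/
import Mathlib

section
/- For every two-input Boolean function f : Bool → Bool → Bool, either f belongs to 𝓡 or its pointwise output negation (fun a b => !(f a b)) belongs to 𝓡. -/
/-- The eight two-input Boolean gate types in 𝓡:
XOR, OR, NAND, TRUE, ¬A, ¬B, (¬A)∨B, A∨(¬B). -/
def Rset : Set (Bool → Bool → Bool) :=
  {fun a b => xor a b, fun a b => a || b, fun a b => !(a && b),
   fun _ _ => true, fun a _ => !a, fun _ b => !b,
   fun a b => !a || b, fun a b => a || !b}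

/-- Every two-input Boolean function either belongs to 𝓡 or its pointwise
output negation belongs to 𝓡. -/
theorem stmt_1 (f : Bool → Bool → Bool) :
    f ∈ Rset ∨ (fun a b => !(f a b)) ∈ Rset := by
  have h : f = fun a b => cond a (cond b (f true true) (f true false))
      (cond b (f false true) (f false false)) := by
    funext a b; cases a <;> cases b <;> rfl
  rw [h]
  cases f true true <;> cases f true false <;> cases f false true <;> cases f false false <;>
    simp only [Rset, Set.mem_insert_iff, Set.mem_singleton_iff, funext_iff, Bool.forall_bool] <;> decide
end

section
/- Every two-input Boolean function f : Bool → Bool → Bool admits at least one of the following representations: (i) there exist g ∈ {XOR, AND, NAND} and constants p q : Bool such that f a b = g (xor a p) (xor b q) for all a b; or (ii) there exist g ∈ {AND, NAND} and maps m₁, m₂ each equal to the identity or to the constant-true map, such that f a b = g (m₁ a) (m₂ b) for all a b. (This is the decomposition 𝓛 = ∘{XOR,AND,NAND}∘ ∪ T{AND,NAND}T.) -/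
/-- Every two-input Boolean function `f` is either (i) an element of
{XOR, AND, NAND} composed with possible negations of the left and/or right
input, or (ii) an element of {AND, NAND} with the left and/or right input
possibly replaced by the constant `true`.
(Decomposition 𝓛 = ∘{XOR,AND,NAND}∘ ∪ T{AND,NAND}T.) -/
theorem stmt_4 (f : Bool → Bool → Bool) :
    (∃ g ∈ ({fun a b => xor a b, fun a b => a && b, fun a b => !(a && b)} :
        Set (Bool → Bool → Bool)),
      ∃ p q : Bool, ∀ a b, f a b = g (xor a p) (xor b q)) ∨
    (∃ g ∈ ({fun a b => a && b, fun a b => !(a && b)} : Set (Bool → Bool → Bool)),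
      ∃ m₁ ∈ ({id, fun _ => true} : Set (Bool → Bool)),
      ∃ m₂ ∈ ({id, fun _ => true} : Set (Bool → Bool)),
        ∀ a b, f a b = g (m₁ a) (m₂ b)) := by
  have hf : f = fun a b => cond a (cond b (f true true) (f true false))
      (cond b (f false true) (f false false)) := by
    funext a b; cases a <;> cases b <;> rfl
  generalize f true true = w at hf
  generalize f true false = x at hf
  generalize f false true = y at hf
  generalize f false false = z at hf
  subst hf
  simp only [Set.mem_insert_iff, Set.mem_singleton_iff]
  revert w x y z
  set_option synthInstance.maxSize 2000 in set_option synthInstance.maxHeartbeats 1000000 in set_option maxHeartbeats 4000000 in decide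
end
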